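/- Fix n ≥ 1 and let c, r, r′ < 2^n with r > c and r′ > c + 1 ≤ 2^n − 1. Then the longest common prefix of the X-gate lists gatesList(c, r) and gatesList(c+1, r′) has length at most 1; moreover, if this longest common prefix has length exactly 1, then c is even, r is odd, and r′ is even. -/

import Mathlib

def grayAux (r : ℕ) : ℕ → ℕ → List ℕ
  | 0, g => [g]
  | fuel + 1, g =>
    if g = r then [g]
    else g :: grayAux r fuel (g ^^^ 2 ^ ((g ^^^ r).factorization 2))

def graySeq (n c r : ℕ) : List ℕ := grayAux r (n + 1) c

abbrev Gate (n : ℕ) := ℕ × (Fin n → Option Bool)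

def gate (n x y : ℕ) : Gate n :=
  ((x ^^^ y).log2,
   fun i => if (i : ℕ) = (x ^^^ y).log2 then none else some (x.testBit i))

def gatesList (n c r : ℕ) : List (Gate n) :=
  (((graySeq n c r).zip (graySeq n c r).tail).dropLast).map fun p => gate n p.1 p.2

def lcpLen {α : Type*} [DecidableEq α] : List α → List α → ℕ
  | a :: as, b :: bs => if a = b then lcpLen as bs + 1 else 0
  | _, _ => 0

namespace Overlap

lemma lcpLen_nil_left {α : Type*} [DecidableEq α] (l : List α) : lcpLen [] l = 0 := by
  cases l <;> rfl

lemma lcpLen_nil_right {α : Type*} [DecidableEq α] (l : List α) : lcpLen l [] = 0 := by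
  cases l <;> rfl

lemma lcpLen_cons {α : Type*} [DecidableEq α] (a b : α) (as bs : List α) :
    lcpLen (a :: as) (b :: bs) = if a = b then lcpLen as bs + 1 else 0 := rfl

lemma grayAux_cons (r fuel g : ℕ) : ∃ rest, grayAux r fuel g = g :: rest := by
  cases fuel with
  | zero => exact ⟨[], rfl⟩
  | succ f =>
    rcases eq_or_ne g r with h | h
    · exact ⟨[], by simp [grayAux, h]⟩
    · exact ⟨grayAux r f (g ^^^ 2 ^ ((g ^^^ r).factorization 2)), by simp [grayAux, h]⟩

def gl (n : ℕ) (L : List ℕ) : List (Gate n) :=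
  ((L.zip L.tail).dropLast).map fun p => gate n p.1 p.2

lemma gatesList_eq_gl (n c r : ℕ) : gatesList n c r = gl n (graySeq n c r) := rfl

lemma gl_cons (n a b x : ℕ) (xs : List ℕ) :
    gl n (a :: b :: x :: xs) = gate n a b :: gl n (b :: x :: xs) := by
  simp [gl, List.zip, List.dropLast_cons₂]

lemma gl_pair (n a b : ℕ) : gl n [a, b] = [] := rfl

lemma gl_single (n a : ℕ) : gl n [a] = [] := rfl

lemma mod2_xor (a b : ℕ) : (a ^^^ b) % 2 = (a % 2 + b % 2) % 2 := by
  have h := Nat.testBit_xor a b 0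
  simp only [Nat.testBit_zero] at h
  rcases Nat.mod_two_eq_zero_or_one a with h1 | h1 <;>
    rcases Nat.mod_two_eq_zero_or_one b with h2 | h2 <;>
    simp [h1, h2] at h ⊢ <;> omega

lemma log2_two_pow (t : ℕ) : (2 ^ t).log2 = t := by
  rw [Nat.log2_eq_log_two, Nat.log_pow (by norm_num)]

/-- unpack gate equality when both xors are powers of two -/
lemma gate_eq_iff {n x y x' y' s s' : ℕ} (hxy : x ^^^ y = 2 ^ s) (hxy' : x' ^^^ y' = 2 ^ s')
    (h : gate n x y = gate n x' y') :
    s = s' ∧ ∀ i : Fin n, ((i : ℕ) ≠ s → x.testBit i = x'.testBit i) := by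
  rw [gate, gate, hxy, hxy', log2_two_pow, log2_two_pow, Prod.mk.injEq] at h
  obtain ⟨h1, h2⟩ := h
  subst h1
  refine ⟨rfl, fun i hi => ?_⟩
  have := congrFun h2 i
  simp [hi] at this
  exact this

/-- the lowest set bit position -/
lemma lowbit_lt {d n : ℕ} (hd : d ≠ 0) (hdn : d < 2 ^ n) : d.factorization 2 < n := by
  have h1 : 2 ^ d.factorization 2 ≤ d := Nat.le_of_dvd (Nat.pos_of_ne_zero hd) (Nat.ordProj_dvd d 2)
  have := lt_of_le_of_lt h1 hdn
  exact (Nat.pow_lt_pow_iff_right (by norm_num)).mp this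

lemma lowbit_pos {d : ℕ} (hd : d ≠ 0) (h2 : d % 2 = 0) : 0 < d.factorization 2 :=
  Nat.Prime.factorization_pos_of_dvd Nat.prime_two hd (Nat.dvd_of_mod_eq_zero h2)

lemma lowbit_eq_zero {d : ℕ} (hd : d ≠ 0) (h : d.factorization 2 = 0) : d % 2 = 1 := by
  rw [Nat.factorization_eq_zero_iff] at h
  rcases h with h | h | h
  · exact absurd Nat.prime_two h
  · omega
  · exact absurd h hd

end Overlap

open Overlap

/-- Lemma 1: the longest common prefix of the X-gate lists of the last subcircuit of
column `c` and the first subcircuit of column `c + 1` has length at most `1`, and if it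
has length exactly `1` then `c` is even, `r` is odd and `r'` is even. -/
theorem intercolumn_overlap_le_one (n c r r' : ℕ) (hn : 1 ≤ n)
    (hc : c < 2 ^ n) (hr : r < 2 ^ n) (hr' : r' < 2 ^ n)
    (hcr : c < r) (hcr' : c + 1 < r') (hc1 : c + 1 ≤ 2 ^ n - 1) :
    lcpLen (gatesList n c r) (gatesList n (c + 1) r') ≤ 1 ∧
    (lcpLen (gatesList n c r) (gatesList n (c + 1) r') = 1 →
      c % 2 = 0 ∧ r % 2 = 1 ∧ r' % 2 = 0) := by
  classical
  obtain ⟨k, rfl⟩ : ∃ k, n = k + 1 := ⟨n - 1, by omega⟩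
  rcases Nat.eq_zero_or_pos (lcpLen (gatesList (k+1) c r) (gatesList (k+1) (c+1) r')) with
    h0 | hpos
  · exact ⟨by omega, fun h => by omega⟩
  have hne1 : c ≠ r := by omega
  have hne2 : c + 1 ≠ r' := by omega
  have hd1 : c ^^^ r ≠ 0 := fun h => hne1 (xor_eq_zero_iff.mp h)
  have hd2 : (c + 1) ^^^ r' ≠ 0 := fun h => hne2 (xor_eq_zero_iff.mp h)
  have h2pow : (1:ℕ) ≤ 2 ^ (k+1) := Nat.one_le_two_pow
  have hcp1 : c + 1 < 2 ^ (k+1) := by omega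
  -- unfold the first step of each sequence
  have hL1 : graySeq (k+1) c r
      = c :: grayAux r (k+1) (c ^^^ 2 ^ ((c ^^^ r).factorization 2)) := by
    simp [graySeq, grayAux, hne1]
  have hL2 : graySeq (k+1) (c+1) r'
      = (c+1) :: grayAux r' (k+1) ((c+1) ^^^ 2 ^ (((c+1) ^^^ r').factorization 2)) := by
    simp [graySeq, grayAux, hne2]
  -- the second element must not be the terminal one, else gatesList is empty
  by_cases hm1 : c ^^^ 2 ^ ((c ^^^ r).factorization 2) = r
  · have hG1 : gatesList (k+1) c r = [] := by
      rw [gatesList_eq_gl, hL1, hm1]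
      simp [grayAux, gl_pair]
    rw [hG1, lcpLen_nil_left] at hpos; omega
  by_cases hm1' : (c+1) ^^^ 2 ^ (((c+1) ^^^ r').factorization 2) = r'
  · have hG2 : gatesList (k+1) (c+1) r' = [] := by
      rw [gatesList_eq_gl, hL2, hm1']
      simp [grayAux, gl_pair]
    rw [hG2, lcpLen_nil_right] at hpos; omega
  -- unfold the second step
  have hU1 : grayAux r (k+1) (c ^^^ 2 ^ ((c ^^^ r).factorization 2))
      = (c ^^^ 2 ^ ((c ^^^ r).factorization 2)) ::
        grayAux r k ((c ^^^ 2 ^ ((c ^^^ r).factorization 2)) ^^^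
          2 ^ (((c ^^^ 2 ^ ((c ^^^ r).factorization 2)) ^^^ r).factorization 2)) := by
    simp [grayAux, hm1]
  have hU2 : grayAux r' (k+1) ((c+1) ^^^ 2 ^ (((c+1) ^^^ r').factorization 2))
      = ((c+1) ^^^ 2 ^ (((c+1) ^^^ r').factorization 2)) ::
        grayAux r' k (((c+1) ^^^ 2 ^ (((c+1) ^^^ r').factorization 2)) ^^^
          2 ^ ((((c+1) ^^^ 2 ^ (((c+1) ^^^ r').factorization 2)) ^^^ r').factorization 2)) := by
    simp [grayAux, hm1']
  obtain ⟨rest1, hrest1⟩ := grayAux_cons r k ((c ^^^ 2 ^ ((c ^^^ r).factorization 2)) ^^^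
      2 ^ (((c ^^^ 2 ^ ((c ^^^ r).factorization 2)) ^^^ r).factorization 2))
  obtain ⟨rest2, hrest2⟩ := grayAux_cons r' k (((c+1) ^^^ 2 ^ (((c+1) ^^^ r').factorization 2)) ^^^
      2 ^ ((((c+1) ^^^ 2 ^ (((c+1) ^^^ r').factorization 2)) ^^^ r').factorization 2))
  -- gatesLists in cons form
  have hG1 : gatesList (k+1) c r
      = gate (k+1) c (c ^^^ 2 ^ ((c ^^^ r).factorization 2)) ::
        gl (k+1) ((c ^^^ 2 ^ ((c ^^^ r).factorization 2)) ::
          ((c ^^^ 2 ^ ((c ^^^ r).factorization 2)) ^^^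
            2 ^ (((c ^^^ 2 ^ ((c ^^^ r).factorization 2)) ^^^ r).factorization 2)) :: rest1) := by
    rw [gatesList_eq_gl, hL1, hU1, hrest1, gl_cons]
  have hG2 : gatesList (k+1) (c+1) r'
      = gate (k+1) (c+1) ((c+1) ^^^ 2 ^ (((c+1) ^^^ r').factorization 2)) ::
        gl (k+1) (((c+1) ^^^ 2 ^ (((c+1) ^^^ r').factorization 2)) ::
          (((c+1) ^^^ 2 ^ (((c+1) ^^^ r').factorization 2)) ^^^
            2 ^ ((((c+1) ^^^ 2 ^ (((c+1) ^^^ r').factorization 2)) ^^^ r').factorization 2))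
          :: rest2) := by
    rw [gatesList_eq_gl, hL2, hU2, hrest2, gl_cons]
  -- the first gates must be equal
  rw [hG1, hG2, lcpLen_cons] at hpos
  by_cases hg : gate (k+1) c (c ^^^ 2 ^ ((c ^^^ r).factorization 2))
      = gate (k+1) (c+1) ((c+1) ^^^ 2 ^ (((c+1) ^^^ r').factorization 2))
  swap
  · rw [if_neg hg] at hpos; omega
  rw [if_pos hg] at hpos
  have hx1 : c ^^^ (c ^^^ 2 ^ ((c ^^^ r).factorization 2)) = 2 ^ ((c ^^^ r).factorization 2) :=
    xor_cancel_left _ _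
  have hx2 : (c+1) ^^^ ((c+1) ^^^ 2 ^ (((c+1) ^^^ r').factorization 2))
      = 2 ^ (((c+1) ^^^ r').factorization 2) := xor_cancel_left _ _
  obtain ⟨htt, hbits⟩ := gate_eq_iff hx1 hx2 hg
  -- t = 0
  have htlt : (c ^^^ r).factorization 2 < k + 1 :=
    lowbit_lt hd1 (Nat.xor_lt_two_pow hc hr)
  have ht0 : (c ^^^ r).factorization 2 = 0 := by
    by_contra h0
    have h := hbits ⟨0, by omega⟩ (by simpa using Ne.symm (Ne.symm h0) |>.symm)
    simp only [Nat.testBit_zero, decide_eq_decide] at h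
    omega
  -- c is even
  have hceven : c % 2 = 0 := by
    have hhalf : c / 2 = (c + 1) / 2 := by
      apply Nat.eq_of_testBit_eq
      intro j
      rw [← Nat.testBit_succ, ← Nat.testBit_succ]
      by_cases hj : j + 1 < k + 1
      · exact hbits ⟨j + 1, hj⟩ (by simp [ht0])
      · have hle : 2 ^ (k+1) ≤ 2 ^ (j+1) := Nat.pow_le_pow_right (by norm_num) (by omega)
        rw [Nat.testBit_lt_two_pow (by omega), Nat.testBit_lt_two_pow (by omega)]
    omega
  -- r is odd
  have hrodd : r % 2 = 1 := by
    have := lowbit_eq_zero hd1 ht0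
    rw [mod2_xor] at this; omega
  -- r' is even
  have hr'even : r' % 2 = 0 := by
    have := lowbit_eq_zero hd2 (htt ▸ ht0)
    rw [mod2_xor] at this; omega
  -- now show the tails have no common prefix
  refine ⟨?_, fun _ => ⟨hceven, hrodd, hr'even⟩⟩
  rw [hG1, hG2, lcpLen_cons, if_pos hg]
  have htail : lcpLen
      (gl (k+1) ((c ^^^ 2 ^ ((c ^^^ r).factorization 2)) ::
          ((c ^^^ 2 ^ ((c ^^^ r).factorization 2)) ^^^
            2 ^ (((c ^^^ 2 ^ ((c ^^^ r).factorization 2)) ^^^ r).factorization 2)) :: rest1))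
      (gl (k+1) (((c+1) ^^^ 2 ^ (((c+1) ^^^ r').factorization 2)) ::
          (((c+1) ^^^ 2 ^ (((c+1) ^^^ r').factorization 2)) ^^^
            2 ^ ((((c+1) ^^^ 2 ^ (((c+1) ^^^ r').factorization 2)) ^^^ r').factorization 2))
          :: rest2)) = 0 := by
    cases rest1 with
    | nil => rw [gl_pair, lcpLen_nil_left]
    | cons x xs =>
      cases rest2 with
      | nil => rw [gl_pair, lcpLen_nil_right]
      | cons y ys =>
        rw [gl_cons, gl_cons, lcpLen_cons]
        rw [if_neg ?_]
        intro hg2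
        -- parities
        have hm1odd : (c ^^^ 2 ^ ((c ^^^ r).factorization 2)) % 2 = 1 := by
          rw [ht0, pow_zero, mod2_xor]; omega
        have hm1'even : ((c+1) ^^^ 2 ^ (((c+1) ^^^ r').factorization 2)) % 2 = 0 := by
          rw [← htt, ht0, pow_zero, mod2_xor]; omega
        have hs1 : 0 < (((c ^^^ 2 ^ ((c ^^^ r).factorization 2)) ^^^ r).factorization 2) := by
          apply lowbit_pos (fun h => hm1 (xor_eq_zero_iff.mp h))
          rw [mod2_xor]; omega
        have hs2 : 0 < ((((c+1) ^^^ 2 ^ (((c+1) ^^^ r').factorization 2)) ^^^ r').factorization 2)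
            := by
          apply lowbit_pos (fun h => hm1' (xor_eq_zero_iff.mp h))
          rw [mod2_xor]; omega
        obtain ⟨hss, hbits2⟩ := gate_eq_iff (xor_cancel_left _ _) (xor_cancel_left _ _) hg2
        have h := hbits2 ⟨0, by omega⟩ (by simp; omega)
        simp only [Nat.testBit_zero, decide_eq_decide] at h
        omega
  rw [htail]
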